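/- If w₃₃ + w₄₄ is nowhere zero, then the Ricci 1-forms of the pure radiation metric ds² = (x w − p² r²/x²) du² + 2 du dr − (4r/x) du dx − (1/p²)(dx² + dy²) are recurrent with associated 1-form Π having coordinate components (1, 0, (w₃₃₃ + w₃₄₄)/(w₃₃ + w₄₄), (w₃₃₄ + w₄₄₄)/(w₃₃ + w₄₄)); that is, (∇_{X₁}S)(X₂,X) − (∇_{X₂}S)(X₁,X) = Π(X₁)S(X₂,X) − Π(X₂)S(X₁,X) for all vector fields X, X₁, X₂. -/

import Mathlib

noncomputable section

open Matrix

/-- Points of the coordinate chart `(u, r, x, y)`, identified with `Fin 4 → ℝ`. -/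
abbrev Pt : Type := Fin 4 → ℝ

/-- Partial derivative of a scalar function along the `i`-th coordinate direction. -/
def pd (i : Fin 4) (F : Pt → ℝ) (q : Pt) : ℝ :=
  fderiv ℝ F q (Pi.single i 1)

/-- Christoffel symbols `Γ^k_{ij}` of the Levi-Civita connection of a metric `g`,
given in coordinates. -/
def Gamma (g : Pt → Matrix (Fin 4) (Fin 4) ℝ) (k i j : Fin 4) (q : Pt) : ℝ :=
  (1/2) * ∑ l, (g q)⁻¹ k l *
    (pd i (fun z => g z l j) q + pd j (fun z => g z i l) q - pd l (fun z => g z i j) q)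

/-- Components `(𝓡(∂ᵢ,∂ⱼ)∂ₖ)^l` of the (1,3)-curvature tensor of `g`. -/
def Riem13 (g : Pt → Matrix (Fin 4) (Fin 4) ℝ) (l i j k : Fin 4) (q : Pt) : ℝ :=
  pd i (Gamma g l j k) q - pd j (Gamma g l i k) q
    + ∑ m, Gamma g l i m q * Gamma g m j k q
    - ∑ m, Gamma g l j m q * Gamma g m i k q

/-- The (0,4) Riemann–Christoffel curvature tensor `R(∂ᵢ,∂ⱼ,∂ₖ,∂ₛ) = g(𝓡(∂ᵢ,∂ⱼ)∂ₖ, ∂ₛ)`. -/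
def Riem (g : Pt → Matrix (Fin 4) (Fin 4) ℝ) (i j k s : Fin 4) (q : Pt) : ℝ :=
  ∑ l, g q l s * Riem13 g l i j k q

/-- The Ricci tensor `S(∂ⱼ,∂ₖ) = ∑ᵢ (𝓡(∂ᵢ,∂ⱼ)∂ₖ)^i`. -/
def Ricci (g : Pt → Matrix (Fin 4) (Fin 4) ℝ) (j k : Fin 4) (q : Pt) : ℝ :=
  ∑ i, Riem13 g i i j k q

/-- The scalar curvature `κ = g^{jk} S_{jk}`. -/
def Scal (g : Pt → Matrix (Fin 4) (Fin 4) ℝ) (q : Pt) : ℝ :=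
  ∑ j, ∑ k, (g q)⁻¹ j k * Ricci g j k q

/-- Covariant derivative `(∇ᵢ T)_{ab}` of a (0,2)-tensor field `T`. -/
def cov2 (g : Pt → Matrix (Fin 4) (Fin 4) ℝ) (T : Fin 4 → Fin 4 → Pt → ℝ)
    (i a b : Fin 4) (q : Pt) : ℝ :=
  pd i (T a b) q - (∑ l, Gamma g l i a q * T l b q) - ∑ l, Gamma g l i b q * T a l q

/-- Covariant derivative `(∇ᵢ T)_{abcd}` of a (0,4)-tensor field `T`. -/
def cov4 (g : Pt → Matrix (Fin 4) (Fin 4) ℝ) (T : Fin 4 → Fin 4 → Fin 4 → Fin 4 → Pt → ℝ)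
    (i a b c d : Fin 4) (q : Pt) : ℝ :=
  pd i (T a b c d) q
    - (∑ l, Gamma g l i a q * T l b c d q)
    - (∑ l, Gamma g l i b q * T a l c d q)
    - (∑ l, Gamma g l i c q * T a b l d q)
    - ∑ l, Gamma g l i d q * T a b c l q

/-- The (1,3)-tensor `𝒟` associated to a (0,4)-tensor `D` via
`D(X₁,X₂,X₃,X₄) = g(𝒟(X₁,X₂)X₃, X₄)`, i.e. `𝒟^l_{ijk} = g^{lm} D_{ijkm}`. -/
def up13 (g : Pt → Matrix (Fin 4) (Fin 4) ℝ) (D : Fin 4 → Fin 4 → Fin 4 → Fin 4 → Pt → ℝ)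
    (l i j k : Fin 4) (q : Pt) : ℝ :=
  ∑ m, (g q)⁻¹ l m * D i j k m q

/-- `(D·H)(X₁,X₂;X,Y)` for a (0,4)-tensor `D` acting as a derivation on a (0,2)-tensor `H`:
`(D·H)(X₁,X₂;X,Y) = −H(𝒟(X,Y)X₁,X₂) − H(X₁,𝒟(X,Y)X₂)`. -/
def dotH2 (g : Pt → Matrix (Fin 4) (Fin 4) ℝ) (D : Fin 4 → Fin 4 → Fin 4 → Fin 4 → Pt → ℝ)
    (H : Fin 4 → Fin 4 → Pt → ℝ) (a b x y : Fin 4) (q : Pt) : ℝ :=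
  - (∑ l, up13 g D l x y a q * H l b q) - ∑ l, up13 g D l x y b q * H a l q

/-- `(D·H)(X₁,X₂,X₃,X₄;X,Y)` for a (0,4)-tensor `D` acting as a derivation on a
(0,4)-tensor `H`. -/
def dotH4 (g : Pt → Matrix (Fin 4) (Fin 4) ℝ) (D : Fin 4 → Fin 4 → Fin 4 → Fin 4 → Pt → ℝ)
    (H : Fin 4 → Fin 4 → Fin 4 → Fin 4 → Pt → ℝ) (a b c d x y : Fin 4) (q : Pt) : ℝ :=
  - (∑ l, up13 g D l x y a q * H l b c d q)
    - (∑ l, up13 g D l x y b q * H a l c d q)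
    - (∑ l, up13 g D l x y c q * H a b l d q)
    - ∑ l, up13 g D l x y d q * H a b c l q

/-- The Tachibana tensor `Q(A,H)` of a symmetric (0,2)-tensor `A` and a (0,4)-tensor `H`. -/
def QAH4 (A : Fin 4 → Fin 4 → Pt → ℝ) (H : Fin 4 → Fin 4 → Fin 4 → Fin 4 → Pt → ℝ)
    (a b c d x y : Fin 4) (q : Pt) : ℝ :=
  A x a q * H y b c d q + A x b q * H a y c d q + A x c q * H a b y d q + A x d q * H a b c y q
    - A y a q * H x b c d q - A y b q * H a x c d q - A y c q * H a b x d q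
    - A y d q * H a b c x q

/-- Kulkarni–Nomizu product of two symmetric (0,2)-tensors. -/
def KN (A E : Fin 4 → Fin 4 → Pt → ℝ) (a b c d : Fin 4) (q : Pt) : ℝ :=
  A a d q * E b c q + A b c q * E a d q - A a c q * E b d q - A b d q * E a c q

/-- The Weyl conformal curvature tensor in dimension 4:
`C = R − (1/2)(g ∧ S) + (κ/12)(g ∧ g)`. -/
def Conf (g : Pt → Matrix (Fin 4) (Fin 4) ℝ) (a b c d : Fin 4) (q : Pt) : ℝ :=
  Riem g a b c d q - (1/2) * KN (fun a b q => g q a b) (Ricci g) a b c d q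
    + (Scal g q / 12) * KN (fun a b q => g q a b) (fun a b q => g q a b) a b c d q

/-- The projective curvature tensor in dimension 4:
`P(X₁,X₂,X₃,X₄) = R(X₁,X₂,X₃,X₄) − (1/3)[g(X₁,X₄)S(X₂,X₃) − g(X₂,X₄)S(X₁,X₃)]`. -/
def Proj (g : Pt → Matrix (Fin 4) (Fin 4) ℝ) (a b c d : Fin 4) (q : Pt) : ℝ :=
  Riem g a b c d q - (1/3) * (g q a d * Ricci g b c q - g q b d * Ricci g a c q)

/-- Components `𝒮^l_a = g^{lm} S_{ma}` of the Ricci operator. -/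
def RicOp (g : Pt → Matrix (Fin 4) (Fin 4) ℝ) (l a : Fin 4) (q : Pt) : ℝ :=
  ∑ m, (g q)⁻¹ l m * Ricci g m a q

/-- The pure radiation metric
`ds² = (x w − p² r²/x²) du² + 2 du dr − (4r/x) du dx − (1/p²)(dx² + dy²)`
in coordinates `(u,r,x,y)`; `P` is the constant `p`. -/
def prMetric (P : ℝ) (w : Pt → ℝ) (q : Pt) : Matrix (Fin 4) (Fin 4) ℝ :=
  !![q 2 * w q - P ^ 2 * (q 1) ^ 2 / (q 2) ^ 2, 1, -2 * q 1 / q 2, 0;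
     1, 0, 0, 0;
     -2 * q 1 / q 2, 0, -1 / P ^ 2, 0;
     0, 0, 0, -1 / P ^ 2]


-- machinery
lemma contDiff_pd {F : Pt → ℝ} (hF : ContDiff ℝ (⊤ : ℕ∞) F) (i : Fin 4) : ContDiff ℝ (⊤ : ℕ∞) (pd i F) :=
  (hF.fderiv_right (m := (⊤ : ℕ∞)) (by simp)).clm_apply (contDiff_const (c := (Pi.single i 1 : Pt)))

def Rind (F : Pt → ℝ) : Prop := ∀ (q : Pt) (t : ℝ), F (Function.update q 1 t) = F q

def Lr : Pt →L[ℝ] Pt :=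
  ContinuousLinearMap.id ℝ Pt - (ContinuousLinearMap.proj 1).smulRight (Pi.single 1 1)

lemma Lr_apply (q : Pt) : Lr q = Function.update q 1 0 := by
  funext j
  simp only [Lr, ContinuousLinearMap.sub_apply, ContinuousLinearMap.id_apply,
    ContinuousLinearMap.smulRight_apply, ContinuousLinearMap.proj_apply, Pi.sub_apply,
    Pi.smul_apply, Pi.single_apply, smul_eq_mul, Function.update]
  by_cases h : j = 1 <;> simp [h]

lemma Lr_single (i : Fin 4) : Lr (Pi.single i 1 : Pt) = if i = 1 then 0 else Pi.single i 1 := by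
  rw [Lr_apply]
  by_cases h : i = 1
  · subst h; funext j
    by_cases hj : j = 1 <;> simp [Function.update, hj, Pi.single_apply]
  · funext j
    by_cases hj : j = 1 <;> simp [Function.update, hj, Pi.single_apply, h, Ne.symm h]

lemma comp_Lr {F : Pt → ℝ} (hR : Rind F) : F ∘ Lr = F := by
  funext q; simp [Lr_apply, hR q 0]

lemma fderiv_rind {F : Pt → ℝ} (hF : Differentiable ℝ F) (hR : Rind F) (q : Pt) :
    fderiv ℝ F q = (fderiv ℝ F (Lr q)).comp (Lr : Pt →L[ℝ] Pt) := by
  conv_lhs => rw [← comp_Lr hR]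
  rw [fderiv_comp q (hF (Lr q)) Lr.differentiableAt, Lr.fderiv]

lemma pd1_eq_zero {F : Pt → ℝ} (hF : Differentiable ℝ F) (hR : Rind F) (q : Pt) :
    pd 1 F q = 0 := by
  rw [pd, fderiv_rind hF hR q]
  simp [Lr_single]

lemma rind_pd {F : Pt → ℝ} (hF : Differentiable ℝ F) (hR : Rind F) (i : Fin 4) :
    Rind (pd i F) := by
  intro q t
  have h1 : Lr (Function.update q 1 t) = Lr q := by
    rw [Lr_apply, Lr_apply]
    funext j; by_cases hj : j = 1 <;> simp [Function.update, hj]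
  rw [pd, pd, fderiv_rind hF hR (Function.update q 1 t), h1, ← fderiv_rind hF hR q]

def pdIter : List (Fin 4) → (Pt → ℝ) → Pt → ℝ
  | [], F => F
  | (i :: l), F => pd i (pdIter l F)

lemma contDiff_pdIter {F : Pt → ℝ} (hF : ContDiff ℝ (⊤ : ℕ∞) F) (l : List (Fin 4)) :
    ContDiff ℝ (⊤ : ℕ∞) (pdIter l F) := by
  induction l with
  | nil => exact hF
  | cons i l ih => exact contDiff_pd ih i

lemma rind_pdIter {F : Pt → ℝ} (hF : ContDiff ℝ (⊤ : ℕ∞) F) (hR : Rind F) (l : List (Fin 4)) :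
    Rind (pdIter l F) := by
  induction l with
  | nil => exact hR
  | cons i l ih => exact rind_pd ((contDiff_pdIter hF l).differentiable (by simp)) ih i

inductive Ex where
  | const : ℝ → Ex
  | rr : Ex
  | xx : Ex
  | ix : Ex
  | wD : List (Fin 4) → Ex
  | add : Ex → Ex → Ex
  | mul : Ex → Ex → Ex

def eval (w : Pt → ℝ) : Ex → Pt → ℝ
  | .const c => fun _ => c
  | .rr => fun z => z 1
  | .xx => fun z => z 2
  | .ix => fun z => (z 2)⁻¹
  | .wD l => pdIter l w
  | .add a b => fun z => eval w a z + eval w b z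
  | .mul a b => fun z => eval w a z * eval w b z

def Dpd (i : Fin 4) : Ex → Ex
  | .const _ => .const 0
  | .rr => .const (if i = 1 then 1 else 0)
  | .xx => .const (if i = 2 then 1 else 0)
  | .ix => if i = 2 then .mul (.const (-1)) (.mul .ix .ix) else .const 0
  | .wD l => if i = 1 then .const 0 else .wD (i :: l)
  | .add a b => .add (Dpd i a) (Dpd i b)
  | .mul a b => .add (.mul (Dpd i a) b) (.mul a (Dpd i b))

def prj (j : Fin 4) : Pt →L[ℝ] ℝ := ContinuousLinearMap.proj j

lemma prj_apply (j : Fin 4) (z : Pt) : prj j z = z j := rfl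

theorem eval_spec {w : Pt → ℝ} (hw : ContDiff ℝ (⊤ : ℕ∞) w) (hR : Rind w) (e : Ex) (q : Pt)
    (hq : q 2 ≠ 0) :
    DifferentiableAt ℝ (eval w e) q ∧ ∀ i, pd i (eval w e) q = eval w (Dpd i e) q := by
  induction e with
  | const c =>
    refine ⟨differentiableAt_const c, fun i => ?_⟩
    simp [pd, eval, Dpd]
  | rr =>
    have hc : eval w Ex.rr = ⇑(prj 1) := rfl
    refine ⟨by rw [hc]; exact (prj 1).differentiableAt, fun i => ?_⟩
    rw [Dpd, pd, hc, ContinuousLinearMap.fderiv]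
    simp [prj_apply, Pi.single_apply, eval, eq_comm]
  | xx =>
    have hc : eval w Ex.xx = ⇑(prj 2) := rfl
    refine ⟨by rw [hc]; exact (prj 2).differentiableAt, fun i => ?_⟩
    rw [Dpd, pd, hc, ContinuousLinearMap.fderiv]
    simp [prj_apply, Pi.single_apply, eval, eq_comm]
  | ix =>
    have hc : eval w Ex.ix = fun z : Pt => (z 2)⁻¹ := rfl
    have hp : HasFDerivAt (fun z : Pt => (z 2)⁻¹) ((-(q 2 ^ 2)⁻¹) • prj 2) q :=
      (hasDerivAt_inv hq).comp_hasFDerivAt q (prj 2).hasFDerivAt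
    refine ⟨by rw [hc]; exact hp.differentiableAt, fun i => ?_⟩
    rw [pd, hc, hp.fderiv]
    have hsa : ∀ j : Fin 4, (Pi.single i (1:ℝ) : Pt) j = if j = i then 1 else 0 := by
      intro j; rw [Pi.single_apply]
    by_cases hi : i = 2
    · subst hi
      simp only [Dpd, if_pos rfl, eval, ContinuousLinearMap.smul_apply, smul_eq_mul,
        prj_apply, hsa, if_pos rfl]
      rw [pow_two, mul_inv]
      simp [eval]
    · simp only [Dpd, if_neg hi, eval, ContinuousLinearMap.smul_apply, smul_eq_mul,
        prj_apply, hsa, if_neg (fun h => hi h.symm : ¬ (2:Fin 4) = i)]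
      ring
  | wD l =>
    refine ⟨((contDiff_pdIter hw l).differentiable (by simp)) q, fun i => ?_⟩
    by_cases hi : i = 1
    · subst hi
      rw [eval]
      rw [pd1_eq_zero ((contDiff_pdIter hw l).differentiable (by simp)) (rind_pdIter hw hR l) q]
      simp [Dpd, eval]
    · simp only [Dpd, if_neg hi, eval, pdIter]
  | add a b iha ihb =>
    refine ⟨iha.1.add ihb.1, fun i => ?_⟩
    rw [eval, Dpd, eval]
    show pd i (fun z => eval w a z + eval w b z) q = _
    rw [pd, fderiv_fun_add iha.1 ihb.1]
    simp only [ContinuousLinearMap.add_apply]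
    rw [← pd, ← pd, (iha.2 i), (ihb.2 i)]
  | mul a b iha ihb =>
    refine ⟨iha.1.mul ihb.1, fun i => ?_⟩
    rw [eval, Dpd, eval]
    show pd i (fun z => eval w a z * eval w b z) q = _
    rw [pd, fderiv_fun_mul iha.1 ihb.1]
    simp only [ContinuousLinearMap.add_apply, ContinuousLinearMap.smul_apply, smul_eq_mul]
    rw [← pd, ← pd, (iha.2 i), (ihb.2 i)]
    simp only [eval]
    ring

open Ex in
def gE (P : ℝ) : Fin 4 → Fin 4 → Ex := fun a b =>
  ![![(.add (.mul (.const (1:ℝ)) (.mul .xx (.wD []))) (.mul (.const ((-1:ℝ) * P ^ 2)) (.mul .rr (.mul .rr (.mul .ix .ix))))), (.const (1:ℝ)), (.mul (.const (-2:ℝ)) (.mul .rr .ix)), (.const 0)],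
    ![(.const (1:ℝ)), (.const 0), (.const 0), (.const 0)],
    ![(.mul (.const (-2:ℝ)) (.mul .rr .ix)), (.const 0), (.const ((-1:ℝ) / P ^ 2)), (.const 0)],
    ![(.const 0), (.const 0), (.const 0), (.const ((-1:ℝ) / P ^ 2))]] a b

open Ex in
def gamE (P : ℝ) : Fin 4 → Fin 4 → Fin 4 → Ex := fun k i j =>
  ![![![(.mul (.const ((1:ℝ) * P ^ 2)) (.mul .rr (.mul .ix .ix))), (.const 0), (.mul (.const (1:ℝ)) .ix), (.const 0)],
      ![(.const 0), (.const 0), (.const 0), (.const 0)],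
      ![(.mul (.const (1:ℝ)) .ix), (.const 0), (.const 0), (.const 0)],
      ![(.const 0), (.const 0), (.const 0), (.const 0)]],
    ![![(.add (.mul (.const ((1:ℝ)/2)) (.mul .xx (.wD [0]))) (.add (.mul (.const ((1:ℝ) * P ^ 2)) (.mul .rr (.wD [2]))) (.mul (.const ((-1:ℝ) * P ^ 4)) (.mul .rr (.mul .rr (.mul .rr (.mul .ix (.mul .ix (.mul .ix .ix))))))))), (.mul (.const ((1:ℝ) * P ^ 2)) (.mul .rr (.mul .ix .ix))), (.add (.mul (.const ((-1:ℝ)/2)) (.wD [])) (.add (.mul (.const ((1:ℝ)/2)) (.mul .xx (.wD [2]))) (.mul (.const ((-2:ℝ) * P ^ 2)) (.mul .rr (.mul .rr (.mul .ix (.mul .ix .ix))))))), (.mul (.const ((1:ℝ)/2)) (.mul .xx (.wD [3])))],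
      ![(.mul (.const ((1:ℝ) * P ^ 2)) (.mul .rr (.mul .ix .ix))), (.const 0), (.mul (.const (-1:ℝ)) .ix), (.const 0)],
      ![(.add (.mul (.const ((-1:ℝ)/2)) (.wD [])) (.add (.mul (.const ((1:ℝ)/2)) (.mul .xx (.wD [2]))) (.mul (.const ((-2:ℝ) * P ^ 2)) (.mul .rr (.mul .rr (.mul .ix (.mul .ix .ix))))))), (.mul (.const (-1:ℝ)) .ix), (.mul (.const (2:ℝ)) (.mul .rr (.mul .ix .ix))), (.const 0)],
      ![(.mul (.const ((1:ℝ)/2)) (.mul .xx (.wD [3]))), (.const 0), (.const 0), (.const 0)]],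
    ![![(.add (.mul (.const (((1:ℝ)/2) * P ^ 2)) (.wD [])) (.add (.mul (.const (((1:ℝ)/2) * P ^ 2)) (.mul .xx (.wD [2]))) (.mul (.const ((-1:ℝ) * P ^ 4)) (.mul .rr (.mul .rr (.mul .ix (.mul .ix .ix))))))), (.mul (.const ((1:ℝ) * P ^ 2)) .ix), (.mul (.const ((-2:ℝ) * P ^ 2)) (.mul .rr (.mul .ix .ix))), (.const 0)],
      ![(.mul (.const ((1:ℝ) * P ^ 2)) .ix), (.const 0), (.const 0), (.const 0)],
      ![(.mul (.const ((-2:ℝ) * P ^ 2)) (.mul .rr (.mul .ix .ix))), (.const 0), (.const 0), (.const 0)],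
      ![(.const 0), (.const 0), (.const 0), (.const 0)]],
    ![![(.mul (.const (((1:ℝ)/2) * P ^ 2)) (.mul .xx (.wD [3]))), (.const 0), (.const 0), (.const 0)],
      ![(.const 0), (.const 0), (.const 0), (.const 0)],
      ![(.const 0), (.const 0), (.const 0), (.const 0)],
      ![(.const 0), (.const 0), (.const 0), (.const 0)]]] k i j

open Ex in
def ricE (P : ℝ) : Fin 4 → Fin 4 → Ex := fun a b =>
  ![![(.add (.mul (.const (((1:ℝ)/2) * P ^ 2)) (.mul .xx (.wD [2, 2]))) (.mul (.const (((1:ℝ)/2) * P ^ 2)) (.mul .xx (.wD [3, 3])))), (.const 0), (.const 0), (.const 0)],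
    ![(.const 0), (.const 0), (.const 0), (.const 0)],
    ![(.const 0), (.const 0), (.const 0), (.const 0)],
    ![(.const 0), (.const 0), (.const 0), (.const 0)]] a b

variable {P : ℝ} {w : Pt → ℝ}

lemma gEntry (P : ℝ) (w : Pt → ℝ) (a b : Fin 4) :
    (fun z => prMetric P w z a b) = eval w (gE P a b) := by
  funext z
  fin_cases a <;> fin_cases b <;>
    simp [prMetric, gE, eval, pdIter, Matrix.vecHead, Matrix.vecTail] <;> ring

def giM (P : ℝ) (w : Pt → ℝ) (q : Pt) : Matrix (Fin 4) (Fin 4) ℝ :=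
  !![0, 1, 0, 0;
     1, -(q 2 * w q) - 3 * P ^ 2 * (q 1) ^ 2 / (q 2) ^ 2, -2 * P ^ 2 * q 1 / q 2, 0;
     0, -2 * P ^ 2 * q 1 / q 2, -P ^ 2, 0;
     0, 0, 0, -P ^ 2]

lemma ginv_eq (hP : P ≠ 0) (q : Pt) (hq : q 2 ≠ 0) :
    (prMetric P w q)⁻¹ = giM P w q := by
  apply Matrix.inv_eq_right_inv
  ext i j
  fin_cases i <;> fin_cases j <;>
    (simp [prMetric, giM, Matrix.mul_apply, Fin.sum_univ_four, Matrix.vecHead, Matrix.vecTail]; try field_simp; try ring)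

lemma pd_gEntry (hw : ContDiff ℝ (⊤ : ℕ∞) w) (hR : Rind w) (q : Pt) (hq : q 2 ≠ 0) (i a b : Fin 4) :
    pd i (fun z => prMetric P w z a b) q = eval w (Dpd i (gE P a b)) q := by
  rw [gEntry P w a b]
  exact (eval_spec hw hR _ q hq).2 i

set_option maxHeartbeats 1000000 in
lemma Gamma_val (hP : P ≠ 0) (hw : ContDiff ℝ (⊤ : ℕ∞) w) (hR : Rind w) (q : Pt) (hq : 0 < q 2)
    (k i j : Fin 4) :
    Gamma (prMetric P w) k i j q = eval w (gamE P k i j) q := by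
  have hq' : q 2 ≠ 0 := ne_of_gt hq
  rw [Gamma, ginv_eq hP q hq']
  simp only [Fin.sum_univ_four, pd_gEntry hw hR q hq']
  fin_cases k <;> fin_cases i <;> fin_cases j <;>
    (simp [giM, gamE, gE, Dpd, eval, pdIter, Matrix.vecHead, Matrix.vecTail];
     try field_simp
     try ring)

lemma pd_Gamma (hP : P ≠ 0) (hw : ContDiff ℝ (⊤ : ℕ∞) w) (hR : Rind w) (q : Pt) (hq : 0 < q 2)
    (a k i j : Fin 4) :
    pd a (Gamma (prMetric P w) k i j) q = eval w (Dpd a (gamE P k i j)) q := by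
  have hev : Gamma (prMetric P w) k i j =ᶠ[nhds q] eval w (gamE P k i j) := by
    filter_upwards [IsOpen.mem_nhds (isOpen_lt continuous_const (continuous_apply 2)) hq]
      with z hz
    exact Gamma_val hP hw hR z hz k i j
  rw [pd, hev.fderiv_eq, ← pd]
  exact (eval_spec hw hR _ q (ne_of_gt hq)).2 a

set_option maxHeartbeats 2000000 in
lemma Ricci_val (hP : P ≠ 0) (hw : ContDiff ℝ (⊤ : ℕ∞) w) (hR : Rind w) (q : Pt) (hq : 0 < q 2)
    (j k : Fin 4) :
    Ricci (prMetric P w) j k q = eval w (ricE P j k) q := by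
  rw [Ricci]
  simp only [Riem13, Fin.sum_univ_four, pd_Gamma hP hw hR q hq, Gamma_val hP hw hR q hq]
  fin_cases j <;> fin_cases k <;>
    (simp [gamE, ricE, Dpd, eval, pdIter, Matrix.vecHead, Matrix.vecTail];
     try field_simp
     try ring)

lemma pd_Ricci (hP : P ≠ 0) (hw : ContDiff ℝ (⊤ : ℕ∞) w) (hR : Rind w) (q : Pt) (hq : 0 < q 2)
    (a j k : Fin 4) :
    pd a (Ricci (prMetric P w) j k) q = eval w (Dpd a (ricE P j k)) q := by
  have hev : Ricci (prMetric P w) j k =ᶠ[nhds q] eval w (ricE P j k) := by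
    filter_upwards [IsOpen.mem_nhds (isOpen_lt continuous_const (continuous_apply 2)) hq]
      with z hz
    exact Ricci_val hP hw hR z hz j k
  rw [pd, hev.fderiv_eq, ← pd]
  exact (eval_spec hw hR _ q (ne_of_gt hq)).2 a


set_option maxHeartbeats 4000000 in
/-- if `w₃₃ + w₄₄` is nowhere zero, then the Ricci 1-forms of the pure
radiation metric are recurrent with associated 1-form
`Π = (1, 0, (w₃₃₃+w₃₄₄)/(w₃₃+w₄₄), (w₃₃₄+w₄₄₄)/(w₃₃+w₄₄))`. -/
theorem stmt_7 (P : ℝ) (hP : P ≠ 0) (w : Pt → ℝ) (hw : ContDiff ℝ (⊤ : ℕ∞) w)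
    (hwr : ∀ (q : Pt) (t : ℝ), w (Function.update q 1 t) = w q)
    (hnz : ∀ q : Pt, 0 < q 2 → pd 2 (pd 2 w) q + pd 3 (pd 3 w) q ≠ 0) :
    let g := prMetric P w
    let Pi1 : Fin 4 → Pt → ℝ := fun i q =>
      ![(1 : ℝ), 0,
        (pd 2 (pd 2 (pd 2 w)) q + pd 2 (pd 3 (pd 3 w)) q)
          / (pd 2 (pd 2 w) q + pd 3 (pd 3 w) q),
        (pd 3 (pd 2 (pd 2 w)) q + pd 3 (pd 3 (pd 3 w)) q)
          / (pd 2 (pd 2 w) q + pd 3 (pd 3 w) q)] i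
    ∀ q : Pt, 0 < q 2 → ∀ i j x : Fin 4,
      cov2 g (Ricci g) i j x q - cov2 g (Ricci g) j i x q
        = Pi1 i q * Ricci g j x q - Pi1 j q * Ricci g i x q := by
  intro g Pi1 q hq i j x
  have hR : Rind w := hwr
  have hD : pd 2 (pd 2 w) q + pd 3 (pd 3 w) q ≠ 0 := hnz q hq
  simp only [g, Pi1, cov2, Fin.sum_univ_four, pd_Ricci hP hw hR q hq,
    Gamma_val hP hw hR q hq, Ricci_val hP hw hR q hq]
  fin_cases i <;> fin_cases j <;> fin_cases x <;>
    (simp [gamE, ricE, Dpd, eval, pdIter, Matrix.vecHead, Matrix.vecTail];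
     try field_simp [hD]
     try ring)
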